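/- arXiv:0709.3790 — 3 statements merged into one kernel-verified Lean document; each statement's English description precedes it below -/
import Mathlib

section
/- Let E be a real inner product space, let D be a continuous linear automorphism of E, and let w, v ∈ E with ‖w‖ = ‖v‖ = 1. Then 2·sin(∠(Dw, Dv)/2) ≤ ‖D‖·‖D⁻¹‖·‖w − v‖, where ‖D‖ and ‖D⁻¹‖ are operator norms. -/
open InnerProductGeometry

/-! The half-angle formula `(2 sin(θ/2))² = 2 - 2 cos θ` and the law of cosines give
`(2 sin(∠(x,y)/2))² ‖x‖‖y‖ = ‖x - y‖² - (‖x‖ - ‖y‖)² ≤ ‖x - y‖²`. For `x = Dw`, `y = Dv` the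
norms are at least `1/‖D⁻¹‖`, while `‖Dw - Dv‖ ≤ ‖D‖‖w - v‖`. -/

section

variable {V : Type*} [NormedAddCommGroup V] [InnerProductSpace ℝ V]

theorem sq_two_sin_half_angle_mul_norm_mul_norm (x y : V) :
    (2 * Real.sin (angle x y / 2)) ^ 2 * (‖x‖ * ‖y‖) = ‖x - y‖ ^ 2 - (‖x‖ - ‖y‖) ^ 2 := by
  have half_angle : (2 * Real.sin (angle x y / 2)) ^ 2 = 2 - 2 * Real.cos (angle x y) := by
    rw [mul_pow, Real.sin_sq_eq_half_sub, mul_div_cancel₀ _ two_ne_zero]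
    ring
  rw [half_angle, norm_sub_sq_real, ← cos_angle_mul_norm_mul_norm]
  ring

theorem mul_two_sin_half_angle_le_norm_sub {x y : V} {r : ℝ} (hr : 0 ≤ r)
    (hx : r ≤ ‖x‖) (hy : r ≤ ‖y‖) : r * (2 * Real.sin (angle x y / 2)) ≤ ‖x - y‖ := by
  have hsin : 0 ≤ Real.sin (angle x y / 2) :=
    Real.sin_nonneg_of_nonneg_of_le_pi (by linarith [angle_nonneg x y])
      (by linarith [angle_le_pi x y, Real.pi_pos])
  refine le_of_pow_le_pow_left₀ two_ne_zero (norm_nonneg _) ?_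
  calc (r * (2 * Real.sin (angle x y / 2))) ^ 2
      = (2 * Real.sin (angle x y / 2)) ^ 2 * (r * r) := by ring
    _ ≤ (2 * Real.sin (angle x y / 2)) ^ 2 * (‖x‖ * ‖y‖) := by gcongr
    _ ≤ ‖x - y‖ ^ 2 := by
      rw [sq_two_sin_half_angle_mul_norm_mul_norm]
      linarith [sq_nonneg (‖x‖ - ‖y‖)]

end

theorem ContinuousLinearEquiv.norm_le_norm_symm_mul_norm_apply {𝕜 E F : Type*}
    [NontriviallyNormedField 𝕜] [SeminormedAddCommGroup E] [SeminormedAddCommGroup F]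
    [NormedSpace 𝕜 E] [NormedSpace 𝕜 F] (D : E ≃L[𝕜] F) (x : E) :
    ‖x‖ ≤ ‖(D.symm : F →L[𝕜] E)‖ * ‖D x‖ := by
  simpa using (D.symm : F →L[𝕜] E).le_opNorm (D x)

/-- For a continuous linear automorphism `D` of a real inner product space and
unit vectors `w`, `v`, one has `2 sin(∠(Dw, Dv)/2) ≤ ‖D‖·‖D⁻¹‖·‖w − v‖`. -/
theorem two_sin_half_angle_le_distortion_mul_dist
    {E : Type*} [NormedAddCommGroup E] [InnerProductSpace ℝ E]
    (D : E ≃L[ℝ] E) {w v : E} (hw : ‖w‖ = 1) (hv : ‖v‖ = 1) :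
    2 * Real.sin (angle (D w) (D v) / 2) ≤
      ‖(D : E →L[ℝ] E)‖ * ‖(D.symm : E →L[ℝ] E)‖ * ‖w - v‖ := by
  set m := ‖(D.symm : E →L[ℝ] E)‖
  have hw' : 1 ≤ m * ‖D w‖ := hw ▸ D.norm_le_norm_symm_mul_norm_apply w
  have hv' : 1 ≤ m * ‖D v‖ := hv ▸ D.norm_le_norm_symm_mul_norm_apply v
  have hm : 0 < m := pos_of_mul_pos_left (one_pos.trans_le hw') (norm_nonneg _)
  have chord : m⁻¹ * (2 * Real.sin (angle (D w) (D v) / 2)) ≤ ‖D w - D v‖ :=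
    mul_two_sin_half_angle_le_norm_sub (inv_nonneg.2 hm.le)
      ((inv_le_iff_one_le_mul₀' hm).2 hw') ((inv_le_iff_one_le_mul₀' hm).2 hv')
  have lipschitz : ‖D w - D v‖ ≤ ‖(D : E →L[ℝ] E)‖ * ‖w - v‖ := by
    rw [← map_sub]
    exact (D : E →L[ℝ] E).le_opNorm (w - v)
  rw [inv_mul_le_iff₀ hm] at chord
  calc 2 * Real.sin (angle (D w) (D v) / 2) ≤ m * ‖D w - D v‖ := chord
    _ ≤ m * (‖(D : E →L[ℝ] E)‖ * ‖w - v‖) := by gcongr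
    _ = ‖(D : E →L[ℝ] E)‖ * m * ‖w - v‖ := by ring
end

section
/- Let E be a real inner product space, let D be a continuous linear automorphism of E, and let w, v ∈ E with ‖w‖ = ‖v‖ = 1. Set K = ‖D‖·‖D⁻¹‖ (operator norms). If K·∠(w,v) ≤ 1, then ∠(Dw, Dv) ≤ 2K·∠(w,v). -/
/-!
For unit vectors the chord `‖w - v‖` equals `2 sin (∠(w, v) / 2)`, while in an inner product space
the Dunkl–Williams inequality `(‖x‖ + ‖y‖) sin (∠(x, y) / 2) ≤ ‖x - y‖` bounds the image chord from
below. Since `‖D w‖, ‖D v‖ ≥ 1 / ‖D⁻¹‖` and `‖D w - D v‖ ≤ ‖D‖ ‖w - v‖`, this gives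
`sin (∠(D w, D v) / 2) ≤ K sin (∠(w, v) / 2)`; Jordan's inequality `2x / π ≤ sin x` and `sin x ≤ x`
then yield `∠(D w, D v) ≤ (π / 2) K ∠(w, v)`.
-/

open InnerProductGeometry Real

theorem Real.sin_sq_half (x : ℝ) : sin (x / 2) ^ 2 = (1 - cos x) / 2 := by
  have h := Real.cos_sq (x / 2)
  rw [mul_div_cancel₀ x two_ne_zero] at h
  rw [sin_sq, h]; ring

section InnerProductSpace

variable {E F : Type*} [NormedAddCommGroup E] [InnerProductSpace ℝ E]
  [NormedAddCommGroup F] [InnerProductSpace ℝ F]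

theorem InnerProductGeometry.sin_half_angle_nonneg (x y : E) : 0 ≤ sin (angle x y / 2) :=
  sin_nonneg_of_nonneg_of_le_pi (by linarith [angle_nonneg x y])
    (by linarith [angle_le_pi x y, pi_pos])

theorem InnerProductGeometry.norm_sub_eq_two_mul_sin_half_angle {x y : E} (hx : ‖x‖ = 1)
    (hy : ‖y‖ = 1) : ‖x - y‖ = 2 * sin (angle x y / 2) := by
  have hsin := sin_half_angle_nonneg x y
  rw [← pow_left_inj₀ (norm_nonneg _) (by positivity) two_ne_zero, mul_pow, sin_sq_half,
    norm_sub_sq_real, ← cos_angle_mul_norm_mul_norm, hx, hy]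
  ring

/-- Dunkl–Williams inequality, inner-product form. -/
theorem InnerProductGeometry.norm_add_norm_mul_sin_half_angle_le (x y : E) :
    (‖x‖ + ‖y‖) * sin (angle x y / 2) ≤ ‖x - y‖ := by
  have hsin := sin_half_angle_nonneg x y
  rw [← pow_le_pow_iff_left₀ (by positivity) (norm_nonneg _) two_ne_zero, mul_pow, sin_sq_half,
    norm_sub_sq_real, ← cos_angle_mul_norm_mul_norm]
  -- the difference of the two sides is `(1 + cos ∠(x, y)) (‖x‖ - ‖y‖)² / 2`
  nlinarith [neg_one_le_cos (angle x y), sq_nonneg (‖x‖ - ‖y‖)]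

theorem ContinuousLinearEquiv.sin_half_angle_map_le (D : E ≃L[ℝ] F) {w v : E} (hw : ‖w‖ = 1)
    (hv : ‖v‖ = 1) :
    sin (angle (D w) (D v) / 2) ≤
      ‖(D : E →L[ℝ] F)‖ * ‖(D.symm : F →L[ℝ] E)‖ * sin (angle w v / 2) := by
  set N := ‖(D : E →L[ℝ] F)‖
  set M := ‖(D.symm : F →L[ℝ] E)‖
  have hsin := sin_half_angle_nonneg (D w) (D v)
  have hM : ∀ u : E, ‖u‖ = 1 → 1 ≤ M * ‖D u‖ := fun u hu ↦ by
    simpa [hu] using (D.symm : F →L[ℝ] E).le_opNorm (D u)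
  have hDwv : ‖D w - D v‖ ≤ N * ‖w - v‖ := by
    simpa using (D : E →L[ℝ] F).le_opNorm (w - v)
  rw [norm_sub_eq_two_mul_sin_half_angle hw hv] at hDwv
  have hnorms : 2 ≤ M * (‖D w‖ + ‖D v‖) := by linarith [hM w hw, hM v hv]
  have hchord := calc
    2 * sin (angle (D w) (D v) / 2) ≤ M * (‖D w‖ + ‖D v‖) * sin (angle (D w) (D v) / 2) := by
      gcongr
    _ ≤ M * ‖D w - D v‖ := by
      rw [mul_assoc]; gcongr; exact norm_add_norm_mul_sin_half_angle_le _ _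
    _ ≤ M * (N * (2 * sin (angle w v / 2))) := by gcongr
  linarith

end InnerProductSpace

theorem Real.le_pi_div_two_mul_of_sin_half_le {φ θ K : ℝ} (hφ₀ : 0 ≤ φ) (hφπ : φ ≤ π)
    (hθ : 0 ≤ θ) (hK : 0 ≤ K) (h : sin (φ / 2) ≤ K * sin (θ / 2)) : φ ≤ π / 2 * K * θ := by
  have hJordan : 2 / π * (φ / 2) ≤ sin (φ / 2) := mul_le_sin (by linarith) (by linarith)
  have hsin : sin (θ / 2) ≤ θ / 2 := sin_le (by linarith)
  have : φ / π ≤ K * θ / 2 := by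
    calc φ / π = 2 / π * (φ / 2) := by ring
      _ ≤ K * (θ / 2) := hJordan.trans (h.trans (by gcongr))
      _ = K * θ / 2 := by ring
  rw [div_le_iff₀ pi_pos] at this
  linarith

theorem angle_image_le_two_distortion_mul_angle_general
    {E : Type*} [NormedAddCommGroup E] [InnerProductSpace ℝ E]
    (D : E ≃L[ℝ] E) {w v : E} (hw : ‖w‖ = 1) (hv : ‖v‖ = 1)
    (K : ℝ) (hK : K = ‖(D : E →L[ℝ] E)‖ * ‖(D.symm : E →L[ℝ] E)‖) :
    angle (D w) (D v) ≤ 2 * K * angle w v := by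
  have hK₀ : 0 ≤ K := hK ▸ by positivity
  have hsin := D.sin_half_angle_map_le hw hv
  rw [← hK] at hsin
  calc angle (D w) (D v) ≤ π / 2 * K * angle w v :=
        le_pi_div_two_mul_of_sin_half_le (angle_nonneg _ _) (angle_le_pi _ _) (angle_nonneg _ _)
          hK₀ hsin
    _ ≤ 2 * K * angle w v := by have := angle_nonneg w v; gcongr; linarith [pi_le_four]

/-- For a continuous linear automorphism `D` of a real inner product space with
quasiconformal distortion `K = ‖D‖·‖D⁻¹‖`, and unit vectors `w`, `v` with
`K·∠(w,v) ≤ 1`, the image angle satisfies `∠(Dw, Dv) ≤ 2K·∠(w,v)`. -/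
theorem angle_image_le_two_distortion_mul_angle
    {E : Type*} [NormedAddCommGroup E] [InnerProductSpace ℝ E]
    (D : E ≃L[ℝ] E) {w v : E} (hw : ‖w‖ = 1) (hv : ‖v‖ = 1)
    (K : ℝ) (hK : K = ‖(D : E →L[ℝ] E)‖ * ‖(D.symm : E →L[ℝ] E)‖)
    (hsmall : K * angle w v ≤ 1) :
    angle (D w) (D v) ≤ 2 * K * angle w v :=
  angle_image_le_two_distortion_mul_angle_general D hw hv K hK
end

section
/- Let C be a symmetric positive definite real n×n matrix, let X be a real n×n matrix with Xᵀ C X = I, and let R be a real n×n matrix with ‖R‖ ≤ 1 in the ℓ²-operator norm. Then ‖Xᵀ (I + R)ᵀ C (I + R) X − I‖ ≤ 3 · ‖C⁻¹‖ · ‖C‖ · ‖R‖. -/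
open scoped Matrix.Norms.L2Operator

/-!
Subtracting `XᵀCX = I`, the deviation is the congruence `Xᵀ (CR + RᵀC + RᵀCR) X`, whose middle
factor has norm at most `3‖C‖‖R‖` once `‖R‖ ≤ 1`. Moreover `XᵀCX = I` forces `XXᵀ = C⁻¹`, so the
C⋆-identity gives `‖X‖² = ‖C⁻¹‖`.
-/

section NormedStarRing

variable {A : Type*} [NormedRing A] [StarRing A] [NormedStarGroup A]

theorem norm_star_mul_mul_one_add_sub_le (C X R : A) (hR : ‖R‖ ≤ 1) :
    ‖star X * star (1 + R) * C * (1 + R) * X - star X * C * X‖ ≤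
      3 * (‖X‖ * ‖X‖) * ‖C‖ * ‖R‖ := by
  have expand : star X * star (1 + R) * C * (1 + R) * X - star X * C * X =
      star X * (C * R + star R * C + star R * C * R) * X := by
    rw [star_add, star_one]
    noncomm_ring
  have middle : ‖C * R + star R * C + star R * C * R‖ ≤ 3 * ‖C‖ * ‖R‖ := by
    have hCR : ‖star R * C * R‖ ≤ ‖C‖ * ‖R‖ := by
      calc ‖star R * C * R‖ ≤ ‖R‖ * ‖C‖ * ‖R‖ := by
            simpa only [norm_star] using norm_mul₃_le (a := star R) (b := C) (c := R)
        _ ≤ 1 * ‖C‖ * ‖R‖ := by gcongr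
        _ = ‖C‖ * ‖R‖ := by rw [one_mul]
    calc _ ≤ ‖C * R‖ + ‖star R * C‖ + ‖star R * C * R‖ := norm_add₃_le
      _ ≤ ‖C‖ * ‖R‖ + ‖R‖ * ‖C‖ + ‖C‖ * ‖R‖ := by
        gcongr
        · exact norm_mul_le _ _
        · simpa only [norm_star] using norm_mul_le (star R) C
      _ = 3 * ‖C‖ * ‖R‖ := by ring
  calc _ = ‖star X * (C * R + star R * C + star R * C * R) * X‖ := by rw [expand]
    _ ≤ ‖X‖ * (3 * ‖C‖ * ‖R‖) * ‖X‖ := by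
      refine norm_mul₃_le.trans ?_
      rw [norm_star]
      gcongr
    _ = 3 * (‖X‖ * ‖X‖) * ‖C‖ * ‖R‖ := by ring

end NormedStarRing

namespace Matrix

variable {n : Type*} [Fintype n] [DecidableEq n]

theorem mul_eq_inv_of_mul_mul_eq_one {α : Type*} [CommRing α] {C X Y : Matrix n n α}
    (h : Y * C * X = 1) : X * Y = C⁻¹ := by
  refine (inv_eq_left_inv ?_).symm
  rw [Matrix.mul_assoc]
  exact mul_eq_one_comm.mp h

end Matrix

theorem conformal_structure_perturbation_estimate_general
    {n : ℕ} (C X R : Matrix (Fin n) (Fin n) ℝ)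
    (hX : X.transpose * C * X = 1) (hR : ‖R‖ ≤ 1) :
    ‖X.transpose * (1 + R).transpose * C * (1 + R) * X - 1‖ ≤
      3 * ‖C⁻¹‖ * ‖C‖ * ‖R‖ := by
  -- over `ℝ`, `star X = Xᴴ` is definitionally `Xᵀ`
  have hX' : star X * C * X = 1 := hX
  have hnorm : ‖X‖ * ‖X‖ = ‖C⁻¹‖ := by
    rw [← CStarRing.norm_self_mul_star, Matrix.mul_eq_inv_of_mul_mul_eq_one hX']
  have key := norm_star_mul_mul_one_add_sub_le C X R hR
  rwa [hX', hnorm] at key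

/-- If `C` is symmetric positive definite, `Xᵀ C X = 1`, and `‖R‖ ≤ 1` (ℓ²-operator
norm), then `‖Xᵀ(I+R)ᵀC(I+R)X − I‖ ≤ 3‖C⁻¹‖‖C‖‖R‖`. -/
theorem conformal_structure_perturbation_estimate
    {n : ℕ} (C X R : Matrix (Fin n) (Fin n) ℝ)
    (hC : C.PosDef) (hX : X.transpose * C * X = 1) (hR : ‖R‖ ≤ 1) :
    ‖X.transpose * (1 + R).transpose * C * (1 + R) * X - 1‖ ≤
      3 * ‖C⁻¹‖ * ‖C‖ * ‖R‖ :=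
  conformal_structure_perturbation_estimate_general C X R hX hR
end
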